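/- arXiv:1006.2500 — 2 statements merged into one kernel-verified Lean document; each statement's English description precedes it below -/
import Mathlib

section
/- Let p be a prime, n ≥ 2 an integer, and q an integer coprime to p. For m ≥ 1 and x ∈ ℤ define O^m(x) = { w ∈ ZMod (p^m) : ∃ y ∈ ℕ, y ≡ x (mod p^m) and w ≡ q^y (mod p^m) }. Then for every y with 0 ≤ y ≤ p^{n-1} - 1, the reduction map ZMod (p^n) → ZMod (p^{n-1}) (taking a residue modulo p^n to its residue modulo p^{n-1}) restricts to a bijection from O^n(y) onto O^{n-1}(y). -/
/-!
Let `d` be the order of `q` modulo `p ^ (n - 1)` and `D` its order modulo `p ^ n`. Lifting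
`q ^ d ≡ 1` one step gives `D ∣ p * d`, and `d < p ^ n` forces
`gcd (p ^ n) d ∣ p ^ (n - 1)`.
Exponents that agree modulo `p ^ n` and modulo `d` agree modulo `lcm (p ^ n) d`, a multiple of
`p * d` and hence of `D`: this is injectivity. For surjectivity, the Chinese remainder theorem
replaces an exponent `k' ≡ y [MOD p ^ (n - 1)]` by some `k ≡ y [MOD p ^ n]` with
`k ≡ k' [MOD d]`.
-/

/-- The set of out-neighbors of `x` in the exponentiation graph modulo `p^m`:
residues modulo `p^m` of `q^y` over all natural numbers `y ≡ x (mod p^m)`. -/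
def outNbrs (p m : ℕ) (q x : ℤ) : Set (ZMod (p ^ m)) :=
  {w | ∃ y : ℕ, ((y : ℤ) : ZMod (p ^ m)) = (x : ZMod (p ^ m)) ∧ (q : ZMod (p ^ m)) ^ y = w}

theorem Nat.mul_dvd_lcm_of_gcd_dvd {a b c : ℕ} (h : Nat.gcd (c * a) b ∣ a) :
    c * b ∣ Nat.lcm (c * a) b := by
  obtain ⟨t, ht⟩ := h
  rcases (Nat.gcd (c * a) b).eq_zero_or_pos with h0 | hpos
  · simp [Nat.eq_zero_of_gcd_eq_zero_right h0]
  refine ⟨t, Nat.eq_of_mul_eq_mul_left hpos ?_⟩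
  calc Nat.gcd (c * a) b * Nat.lcm (c * a) b = c * a * b := Nat.gcd_mul_lcm _ _
    _ = c * (Nat.gcd (c * a) b * t) * b := by rw [← ht]
    _ = Nat.gcd (c * a) b * (c * b * t) := by ring

theorem Nat.gcd_prime_pow_succ_dvd {p k d : ℕ} (hp : p.Prime) (hd0 : 0 < d)
    (hd : d < p ^ (k + 1)) :
    Nat.gcd (p ^ (k + 1)) d ∣ p ^ k := by
  obtain ⟨j, -, hj⟩ := (Nat.dvd_prime_pow hp).mp (Nat.gcd_dvd_left (p ^ (k + 1)) d)
  have hlt : p ^ j < p ^ (k + 1) := hj ▸ (Nat.le_of_dvd hd0 (Nat.gcd_dvd_right _ d)).trans_lt hd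
  rw [hj]
  exact pow_dvd_pow p (Nat.lt_succ_iff.mp ((Nat.pow_lt_pow_iff_right hp.one_lt).mp hlt))

theorem pow_succ_dvd_pow_sub_one {R : Type*} [CommRing R] {p M : ℕ} {a : R} (hM : M ≠ 0)
    (h : (p : R) ^ M ∣ a - 1) : (p : R) ^ (M + 1) ∣ a ^ p - 1 := by
  have hp : (p : R) ∣ a - 1 := (dvd_pow_self _ hM).trans h
  have hsum : (p : R) ∣ ∑ i ∈ Finset.range p, a ^ i := by
    have hsplit : ∑ i ∈ Finset.range p, a ^ i = ∑ i ∈ Finset.range p, (a ^ i - 1) + p := by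
      simp [Finset.sum_sub_distrib]
    rw [hsplit]
    exact dvd_add (Finset.dvd_sum fun i _ => hp.trans (sub_one_dvd_pow_sub_one a i)) dvd_rfl
  rw [← geom_sum_mul, pow_succ']
  exact mul_dvd_mul hsum h

theorem ZMod.orderOf_intCast_dvd_mul_orderOf {p m : ℕ} (hm : m ≠ 0) (a : ℤ) :
    orderOf (a : ZMod (p ^ (m + 1))) ∣ p * orderOf (a : ZMod (p ^ m)) := by
  have h : ((p ^ m : ℕ) : ℤ) ∣ a ^ orderOf (a : ZMod (p ^ m)) - 1 := by
    rw [← ZMod.intCast_eq_intCast_iff_dvd_sub]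
    push_cast
    exact (pow_orderOf_eq_one _).symm
  apply orderOf_dvd_of_pow_eq_one
  have hlift := pow_succ_dvd_pow_sub_one hm (by exact_mod_cast h)
  rw [mul_comm, pow_mul]
  exact_mod_cast
    ((ZMod.intCast_eq_intCast_iff_dvd_sub 1 _ _).mpr (by exact_mod_cast hlift)).symm

theorem ZMod.isOfFinOrder_intCast {p : ℕ} {q : ℤ} (hq : IsCoprime q (p : ℤ)) (k : ℕ)
    [NeZero (p ^ k)] :
    IsOfFinOrder (q : ZMod (p ^ k)) := by
  refine isOfFinOrder_iff_isUnit.mpr (isCoprime_zero_right.mp ?_)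
  have hcop := (hq.pow_right (n := k)).map (Int.castRingHom (ZMod (p ^ k)))
  rwa [map_pow, map_natCast, ← Nat.cast_pow, ZMod.natCast_self, eq_intCast] at hcop

theorem bijOn_pow_modEq {M₁ M₂ : Type*} [Monoid M₁] [Monoid M₂] (f : M₁ →* M₂)
    {u : M₁} (hu : IsOfFinOrder u) {M N : ℕ} (y : ℕ) (hMN : M ∣ N)
    (hgcd : N.gcd (orderOf (f u)) ∣ M) (hord : orderOf u ∣ N.lcm (orderOf (f u))) :
    Set.BijOn f {w | ∃ k, k ≡ y [MOD N] ∧ u ^ k = w}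
      {w | ∃ k, k ≡ y [MOD M] ∧ f u ^ k = w} := by
  have hfu := f.isOfFinOrder hu
  refine ⟨?_, ?_, ?_⟩
  · rintro _ ⟨k, hk, rfl⟩
    exact ⟨k, hk.of_dvd hMN, (map_pow f u k).symm⟩
  · rintro _ ⟨k₁, hk₁, rfl⟩ _ ⟨k₂, hk₂, rfl⟩ h
    rw [map_pow, map_pow, hfu.pow_eq_pow_iff_modEq] at h
    exact hu.pow_eq_pow_iff_modEq.mpr ((Nat.mod_lcm (hk₁.trans hk₂.symm) h).of_dvd hord)
  · rintro _ ⟨k', hk', rfl⟩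
    obtain ⟨k, hkN, hkd⟩ := Nat.chineseRemainder' (hk'.symm.of_dvd hgcd)
    exact ⟨u ^ k, ⟨k, hkN, rfl⟩, by rw [map_pow, hfu.pow_eq_pow_iff_modEq]; exact hkd⟩

theorem outNbrs_natCast (p m : ℕ) (q : ℤ) (y : ℕ) :
    outNbrs p m q y = {w | ∃ k : ℕ, k ≡ y [MOD p ^ m] ∧ (q : ZMod (p ^ m)) ^ k = w} := by
  ext w
  simp only [outNbrs, Int.cast_natCast, ZMod.natCast_eq_natCast_iff, Set.mem_ofPred_eq]

theorem bijOn_castHom_outNbrs (p n : ℕ) (q : ℤ) (hp : p.Prime) (hn : 2 ≤ n)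
    (hq : IsCoprime q (p : ℤ)) :
    ∀ y : ℕ, y ≤ p ^ (n - 1) - 1 →
      Set.BijOn (ZMod.castHom (pow_dvd_pow p (Nat.sub_le n 1)) (ZMod (p ^ (n - 1))))
        (outNbrs p n q (y : ℤ)) (outNbrs p (n - 1) q (y : ℤ)) := by
  intro y _
  obtain ⟨m, rfl⟩ : ∃ m, n = m + 1 := ⟨n - 1, by omega⟩
  have hm : m ≠ 0 := by omega
  have : NeZero p := ⟨hp.ne_zero⟩
  set d := orderOf (q : ZMod (p ^ m))
  have hd : d < p ^ (m + 1) :=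
    (orderOf_le_card_univ.trans_eq (ZMod.card _)).trans_lt (Nat.pow_lt_pow_succ hp.one_lt)
  have hgcd := Nat.gcd_prime_pow_succ_dvd hp (ZMod.isOfFinOrder_intCast hq m).orderOf_pos hd
  have hord : orderOf (q : ZMod (p ^ (m + 1))) ∣ (p ^ (m + 1)).lcm d := by
    have hlcm := Nat.mul_dvd_lcm_of_gcd_dvd (c := p) (a := p ^ m) (b := d) (by rwa [← pow_succ'])
    rw [← pow_succ'] at hlcm
    exact (ZMod.orderOf_intCast_dvd_mul_orderOf hm q).trans hlcm
  have hbij := bijOn_pow_modEq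
    (ZMod.castHom (pow_dvd_pow p m.le_succ) (ZMod (p ^ m)) : ZMod (p ^ (m + 1)) →* ZMod (p ^ m))
    (ZMod.isOfFinOrder_intCast hq (m + 1)) y (pow_dvd_pow p m.le_succ)
  simp only [MonoidHom.coe_coe, map_intCast] at hbij
  rw [outNbrs_natCast, outNbrs_natCast]
  exact hbij hgcd hord
end

section
/- Let p be a prime, n ≥ 2 an integer, q an integer coprime to p, and k a positive integer. Let A_m denote the adjacency matrix of the exponentiation graph Γ_{p,m,q}. Then trace(A_n^k) = trace(A_{n-1}^k). -/
open Classical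

/-- Adjacency matrix of the exponentiation graph `Γ_{p,m,q}`:
entry `1` at `(x, w)` iff there is `y : ℕ` with `y ≡ x (mod p^m)` and `w ≡ q^y (mod p^m)`. -/
noncomputable def expAdj (p m : ℕ) (q : ℤ) [Fact p.Prime] :
    Matrix (ZMod (p ^ m)) (ZMod (p ^ m)) ℤ := fun x w =>
  if ∃ y : ℕ, (y : ZMod (p ^ m)) = x ∧ ((q : ZMod (p ^ m)) ^ y = w) then 1 else 0

/-!
Let `B = reduceMatrix p m` be the 0/1 matrix of the reduction `ℤ/p^(m+1) → ℤ/p^m` and let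
`C = expLiftAdj p q m`, so `C v w = 1` iff `w ≡ q^y (mod p^(m+1))` for some `y ≡ v (mod p^m)`.
Then `A_(m+1) = B C` and `C B = A_m`, so `tr (A_(m+1)^k) = tr (A_m^k)` for `k ≥ 1`.

Both identities rest on one periodicity fact: if `r` is the order of `q` modulo `p`, then
`q^(r p^m) ≡ 1 (mod p^(m+1))` and `r` is prime to `p`. Hence `q^y mod p^(m+1)` depends only on
`y mod r p^m`. This lets an exponent `y ≡ x (mod p^m)` be replaced, by the Chinese remainder
theorem, with one that is `≡ x (mod p^(m+1))` (giving `A_(m+1) = B C`), and it shows that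
`q^y mod p^(m+1)` is determined by `y mod p^m` and `q^y mod p` (so `C B` counts each edge of
`Γ_(p,m,q)` once, provided `m ≥ 1`).
-/

section RelMatrix
variable {α β γ : Type*} (R : Type*) [Semiring R]

noncomputable def relMatrix (r : α → β → Prop) : Matrix α β R :=
  Matrix.of fun a b => if r a b then 1 else 0

variable {R}

theorem relMatrix_mul_relMatrix [Fintype β] {r : α → β → Prop} {s : β → γ → Prop}
    (huniq : ∀ a c b b', r a b → s b c → r a b' → s b' c → b = b') :
    relMatrix R r * relMatrix R s = relMatrix R fun a c => ∃ b, r a b ∧ s b c := by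
  ext a c
  simp only [relMatrix, Matrix.mul_apply, Matrix.of_apply, one_mul, ite_zero_mul_ite_zero]
  split_ifs with h
  · obtain ⟨b, hr, hs⟩ := h
    rw [Finset.sum_eq_single b
      (fun b' _ hb' => if_neg fun h' => hb' (huniq a c b' b h'.1 h'.2 hr hs)) (by simp),
      if_pos ⟨hr, hs⟩]
  · exact Finset.sum_eq_zero fun b _ => if_neg fun h' => h ⟨b, h'⟩

end RelMatrix

theorem Matrix.trace_pow_succ_mul_comm {m n R : Type*} [Fintype m] [Fintype n] [DecidableEq m]
    [DecidableEq n] [CommSemiring R] (A : Matrix m n R) (B : Matrix n m R) (k : ℕ) :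
    trace ((A * B) ^ (k + 1)) = trace ((B * A) ^ (k + 1)) := by
  have h : ∀ i : ℕ, (A * B) ^ (i + 1) = A * ((B * A) ^ i * B) := by
    intro i
    induction i with
    | zero => simp
    | succ i ih => rw [pow_succ, ih, pow_succ]; simp only [Matrix.mul_assoc]
  rw [h, trace_mul_comm, Matrix.mul_assoc, ← pow_succ]

namespace ZMod

noncomputable def reducePow (p m : ℕ) : ZMod (p ^ (m + 1)) →+* ZMod (p ^ m) :=
  castHom (pow_dvd_pow p m.le_succ) _

variable {p : ℕ} [Fact p.Prime]

theorem coprime_orderOf_unit (u : (ZMod p)ˣ) : (orderOf u).Coprime p :=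
  Nat.Coprime.coprime_dvd_left (orderOf_units_dvd_card_sub_one u)
    ((Nat.coprime_self_sub_left (Fact.out : p.Prime).one_le).mpr (Nat.coprime_one_left p))

variable {q : ℤ} {u : (ZMod p)ˣ}

theorem intCast_pow_orderOf_mul_pow_eq_one (hu : (u : ZMod p) = q) (m : ℕ) :
    (q : ZMod (p ^ (m + 1))) ^ (orderOf u * p ^ m) = 1 := by
  have hmodp : (p : ℤ) ∣ q ^ orderOf u - 1 := by
    rw [← intCast_zmod_eq_zero_iff_dvd]
    push_cast
    rw [← hu, ← Units.val_pow_eq_pow_val, pow_orderOf_eq_one, Units.val_one, sub_self]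
  have := dvd_sub_pow_of_dvd_sub hmodp m
  rw [one_pow, ← pow_mul] at this
  have h := (intCast_zmod_eq_zero_iff_dvd _ (p ^ (m + 1))).mpr (by exact_mod_cast this)
  push_cast at h
  exact sub_eq_zero.mp h

theorem intCast_pow_eq_pow_of_modEq (hu : (u : ZMod p) = q) {m y y' : ℕ}
    (h : y ≡ y' [MOD orderOf u * p ^ m]) :
    (q : ZMod (p ^ (m + 1))) ^ y = (q : ZMod (p ^ (m + 1))) ^ y' := by
  have hN := intCast_pow_orderOf_mul_pow_eq_one hu m
  rw [pow_eq_pow_mod y hN, pow_eq_pow_mod y' hN, h]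

theorem exists_natCast_eq_intCast_pow_eq (hu : (u : ZMod p) = q) {m y : ℕ}
    (x : ZMod (p ^ (m + 1))) (hy : (y : ZMod (p ^ m)) = reducePow p m x) :
    ∃ y' : ℕ, (y' : ZMod (p ^ (m + 1))) = x ∧
      (q : ZMod (p ^ (m + 1))) ^ y' = (q : ZMod (p ^ (m + 1))) ^ y := by
  have hgcd : Nat.gcd (p ^ (m + 1)) (orderOf u * p ^ m) = p ^ m := by
    rw [pow_succ', Nat.gcd_mul_right, ((coprime_orderOf_unit u).symm).gcd_eq_one, one_mul]
  have hcompat : x.val ≡ y [MOD Nat.gcd (p ^ (m + 1)) (orderOf u * p ^ m)] := by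
    rw [hgcd, ← natCast_eq_natCast_iff, hy, ← map_natCast (reducePow p m),
      natCast_zmod_val]
  obtain ⟨y', hx, hperiod⟩ := Nat.chineseRemainder' hcompat
  refine ⟨y', ?_, intCast_pow_eq_pow_of_modEq hu hperiod⟩
  rw [(natCast_eq_natCast_iff _ _ _).mpr hx, natCast_zmod_val]

theorem intCast_pow_eq_pow_of_pow_eq_pow (hu : (u : ZMod p) = q) {m y y' : ℕ} (hm : m ≠ 0)
    (hy : (y : ZMod (p ^ m)) = y') (hpow : (q : ZMod (p ^ m)) ^ y = (q : ZMod (p ^ m)) ^ y') :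
    (q : ZMod (p ^ (m + 1))) ^ y = (q : ZMod (p ^ (m + 1))) ^ y' := by
  have hmodp : (q : ZMod p) ^ y = (q : ZMod p) ^ y' := by
    simpa only [map_pow, map_intCast] using
      congrArg (castHom (dvd_pow_self p hm) (ZMod p)) hpow
  have horder : y ≡ y' [MOD orderOf u] := by
    rw [← pow_eq_pow_iff_modEq]
    rw [← hu] at hmodp
    exact Units.ext (by simpa only [Units.val_pow_eq_pow_val] using hmodp)
  refine intCast_pow_eq_pow_of_modEq hu ?_
  exact (Nat.modEq_and_modEq_iff_modEq_mul ((coprime_orderOf_unit u).pow_right m)).mp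
    ⟨horder, (natCast_eq_natCast_iff _ _ _).mp hy⟩

end ZMod

section ExpAdj
variable (p : ℕ) [Fact p.Prime] (q : ℤ) (m : ℕ)

noncomputable def reduceMatrix : Matrix (ZMod (p ^ (m + 1))) (ZMod (p ^ m)) ℤ :=
  relMatrix ℤ fun x v => ZMod.reducePow p m x = v

noncomputable def expLiftAdj : Matrix (ZMod (p ^ m)) (ZMod (p ^ (m + 1))) ℤ :=
  relMatrix ℤ fun v w => ∃ y : ℕ, (y : ZMod (p ^ m)) = v ∧ (q : ZMod (p ^ (m + 1))) ^ y = w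

variable {p q m}

theorem expAdj_succ_eq_reduceMatrix_mul (hq : IsCoprime q p) :
    expAdj p (m + 1) q = reduceMatrix p m * expLiftAdj p q m := by
  rw [reduceMatrix, expLiftAdj, relMatrix_mul_relMatrix (by rintro x w v v' rfl - rfl -; rfl)]
  ext x w
  simp only [relMatrix, Matrix.of_apply, expAdj, exists_eq_left']
  congr 1
  apply propext
  constructor
  · rintro ⟨y, rfl, rfl⟩
    exact ⟨y, (map_natCast _ y).symm, rfl⟩
  · rintro ⟨y, hy, rfl⟩
    exact ZMod.exists_natCast_eq_intCast_pow_eq (ZMod.coe_unitOfIsCoprime q hq) x hy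

theorem expLiftAdj_mul_reduceMatrix (hm : m ≠ 0) (hq : IsCoprime q p) :
    expLiftAdj p q m * reduceMatrix p m = expAdj p m q := by
  have hreduce (y : ℕ) :
      ZMod.reducePow p m ((q : ZMod (p ^ (m + 1))) ^ y) = (q : ZMod (p ^ m)) ^ y := by
    rw [map_pow, map_intCast]
  rw [reduceMatrix, expLiftAdj, relMatrix_mul_relMatrix]
  · ext v w
    simp only [relMatrix, Matrix.of_apply, expAdj]
    congr 1
    apply propext
    constructor
    · rintro ⟨-, ⟨y, hy, rfl⟩, rfl⟩
      exact ⟨y, hy, (hreduce y).symm⟩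
    · rintro ⟨y, hy, rfl⟩
      exact ⟨_, ⟨y, hy, rfl⟩, hreduce y⟩
  · rintro v w - - ⟨y, rfl, rfl⟩ hw ⟨y', hy', rfl⟩ rfl
    rw [hreduce, hreduce] at hw
    exact ZMod.intCast_pow_eq_pow_of_pow_eq_pow (ZMod.coe_unitOfIsCoprime q hq) hm hy'.symm hw

end ExpAdj

theorem trace_pow_expAdj_stable (p n k : ℕ) (q : ℤ) [Fact p.Prime]
    (hn : 2 ≤ n) (hk : 0 < k) (hq : IsCoprime q (p : ℤ)) :
    Matrix.trace ((expAdj p n q) ^ k) = Matrix.trace ((expAdj p (n - 1) q) ^ k) := by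
  obtain ⟨m, rfl⟩ : ∃ m, n = m + 1 := ⟨n - 1, by omega⟩
  obtain ⟨j, rfl⟩ : ∃ j, k = j + 1 := ⟨k - 1, by omega⟩
  rw [Nat.add_sub_cancel, expAdj_succ_eq_reduceMatrix_mul hq,
    ← expLiftAdj_mul_reduceMatrix (by omega) hq]
  exact Matrix.trace_pow_succ_mul_comm _ _ j
end
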